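/- Bound on the trace of the Yukawa Gram matrix: suppose ε ≥ 0, β^y_i(y) = 0 for all i, and the quartic positivity assumption Σ_{i,j} [Tr((y_i ȳ_j + y_j ȳ_i)(y_i ȳ_j + y_j ȳ_i)) − Tr(y_i ȳ_j y_j ȳ_i)] ≥ 0 holds (this double sum is automatically a real number). Then 0 ≤ b₀ ≤ Ns ε. -/
import Mathlib


open Matrix

noncomputable section

/-- Entrywise complex conjugate of a matrix. -/
def mconj {Nf : ℕ} (A : Matrix (Fin Nf) (Fin Nf) ℂ) : Matrix (Fin Nf) (Fin Nf) ℂ :=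
  A.map (starRingEnd ℂ)

/-- `Z_{ij} = Tr(y_i ȳ_j + ȳ_i y_j)` (a real number). -/
def Zw {Ns Nf : ℕ} (y : Fin Ns → Matrix (Fin Nf) (Fin Nf) ℂ) (i j : Fin Ns) : ℝ :=
  (Matrix.trace (y i * mconj (y j) + mconj (y i) * y j)).re

/-- `X_{ijkl} = (1/4) Σ_σ Tr(y_{σ(i)} ȳ_{σ(j)} y_{σ(k)} ȳ_{σ(l)})`,
summing over all 24 permutations of the index list `(i,j,k,l)`. -/
def Xw {Ns Nf : ℕ} (y : Fin Ns → Matrix (Fin Nf) (Fin Nf) ℂ) (i j k l : Fin Ns) : ℝ :=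
  (1 / 4) * (∑ σ : Equiv.Perm (Fin 4),
    Matrix.trace (y (![i, j, k, l] (σ 0)) * mconj (y (![i, j, k, l] (σ 1))) *
      (y (![i, j, k, l] (σ 2)) * mconj (y (![i, j, k, l] (σ 3)))))).re

/-- Full permutation symmetry of the quartic coupling tensor. -/
def FullySymm {Ns : ℕ} (lam : Fin Ns → Fin Ns → Fin Ns → Fin Ns → ℝ) : Prop :=
  ∀ i j k l, lam i j k l = lam j i k l ∧ lam i j k l = lam i k j l ∧
    lam i j k l = lam i j l k

/-- One-loop quartic beta function for Weyl fermions (α = 2). -/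
def betaLamW {Ns Nf : ℕ} (ε : ℝ) (lam : Fin Ns → Fin Ns → Fin Ns → Fin Ns → ℝ)
    (y : Fin Ns → Matrix (Fin Nf) (Fin Nf) ℂ) (i j k l : Fin Ns) : ℝ :=
  -ε * lam i j k l
    + ∑ m, ∑ n, (lam i j m n * lam m n k l + lam i k m n * lam m n j l
        + lam i l m n * lam m n j k)
    - 4 * Xw y i j k l
    + (1 / 2) * ∑ m, (Zw y i m * lam m j k l + Zw y j m * lam i m k l
        + Zw y k m * lam i j m l + Zw y l m * lam i j k m)

/-- One-loop Yukawa beta function for Weyl fermions (α = 2). -/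
def betaYW {Ns Nf : ℕ} (ε : ℝ) (y : Fin Ns → Matrix (Fin Nf) (Fin Nf) ℂ) (i : Fin Ns) :
    Matrix (Fin Nf) (Fin Nf) ℂ :=
  (-(1 / 2) * (ε : ℂ)) • y i
    + (1 / 2 : ℂ) • ∑ j, (y j * mconj (y j) * y i + y i * mconj (y j) * y j
        + (4 : ℂ) • (y j * mconj (y i) * y j))
    + (1 / 2 : ℂ) • ∑ j, ((Zw y i j : ℂ) • y j)

/-- `a₀ = λ_{iijj}`. -/
def a0inv {Ns : ℕ} (lam : Fin Ns → Fin Ns → Fin Ns → Fin Ns → ℝ) : ℝ :=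
  ∑ i, ∑ j, lam i i j j

/-- `a₁ = λ_{iimn} λ_{jjmn}`. -/
def a1inv {Ns : ℕ} (lam : Fin Ns → Fin Ns → Fin Ns → Fin Ns → ℝ) : ℝ :=
  ∑ m, ∑ n, (∑ i, lam i i m n) * (∑ j, lam j j m n)

/-- `S = λ_{ijkl} λ_{ijkl} = ‖λ‖²`. -/
def Sinv {Ns : ℕ} (lam : Fin Ns → Fin Ns → Fin Ns → Fin Ns → ℝ) : ℝ :=
  ∑ i, ∑ j, ∑ k, ∑ l, lam i j k l ^ 2

/-- `b₀ = Z_{ii}`. -/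
def b0inv {Ns Nf : ℕ} (y : Fin Ns → Matrix (Fin Nf) (Fin Nf) ℂ) : ℝ :=
  ∑ i, Zw y i i

/-- `b₁ = Z_{ij} Z_{ij} − b₀²/Ns`. -/
def b1inv {Ns Nf : ℕ} (y : Fin Ns → Matrix (Fin Nf) (Fin Nf) ℂ) : ℝ :=
  (∑ i, ∑ j, Zw y i j ^ 2) - b0inv y ^ 2 / (Ns : ℝ)

/-- `b₂ = Σ_{i,j} (λ_{ijkk} − (a₀/Ns) δ_{ij} + Z_{ij} − (b₀/Ns) δ_{ij})²`. -/
def b2inv {Ns Nf : ℕ} (lam : Fin Ns → Fin Ns → Fin Ns → Fin Ns → ℝ)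
    (y : Fin Ns → Matrix (Fin Nf) (Fin Nf) ℂ) : ℝ :=
  ∑ i, ∑ j, ((∑ k, lam i j k k) - (a0inv lam / (Ns : ℝ)) * (if i = j then 1 else 0)
      + Zw y i j - (b0inv y / (Ns : ℝ)) * (if i = j then 1 else 0)) ^ 2

/-- `b₃ = X_{iijj}`. -/
def b3inv {Ns Nf : ℕ} (y : Fin Ns → Matrix (Fin Nf) (Fin Nf) ℂ) : ℝ :=
  ∑ i, ∑ j, Xw y i i j j

/-- `Y = Tr(y_i ȳ_i y_j ȳ_j) = ‖y_i ȳ_i‖²`. -/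
def Yinv {Ns Nf : ℕ} (y : Fin Ns → Matrix (Fin Nf) (Fin Nf) ℂ) : ℝ :=
  (∑ i, ∑ j, Matrix.trace (y i * mconj (y i) * (y j * mconj (y j)))).re

/-- `b̃₀ = a₀ b₀ / Ns`. -/
def btilde0 {Ns Nf : ℕ} (lam : Fin Ns → Fin Ns → Fin Ns → Fin Ns → ℝ)
    (y : Fin Ns → Matrix (Fin Nf) (Fin Nf) ℂ) : ℝ :=
  a0inv lam * b0inv y / (Ns : ℝ)

/-- The `A`-function `A_y(λ)` generating the one-loop quartic beta function. -/
def Afun {Ns Nf : ℕ} (ε : ℝ) (lam : Fin Ns → Fin Ns → Fin Ns → Fin Ns → ℝ)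
    (y : Fin Ns → Matrix (Fin Nf) (Fin Nf) ℂ) : ℝ :=
  -(1 / 2) * ε * (∑ i, ∑ j, ∑ k, ∑ l, lam i j k l * lam i j k l)
    + (∑ i, ∑ j, ∑ k, ∑ l, ∑ m, ∑ n, lam i j k l * lam k l m n * lam m n i j)
    - 4 * (∑ i, ∑ j, ∑ k, ∑ l, Xw y i j k l * lam i j k l)
    + (∑ i, ∑ j, ∑ k, ∑ l, ∑ m, Zw y i j * lam i k l m * lam j k l m)


lemma mconj_mul {Nf : ℕ} (A B : Matrix (Fin Nf) (Fin Nf) ℂ) :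
    mconj (A * B) = mconj A * mconj B := Matrix.map_mul

lemma mconj_mconj {Nf : ℕ} (A : Matrix (Fin Nf) (Fin Nf) ℂ) : mconj (mconj A) = A := by
  ext a b; simp [mconj]

lemma mconj_transpose {Nf : ℕ} (A : Matrix (Fin Nf) (Fin Nf) ℂ) :
    (mconj A)ᵀ = mconj Aᵀ := by
  ext a b; simp [mconj]

lemma trace_mconj {Nf : ℕ} (A : Matrix (Fin Nf) (Fin Nf) ℂ) :
    Matrix.trace (mconj A) = starRingEnd ℂ (Matrix.trace A) := by
  simp [Matrix.trace, mconj, Matrix.diag, map_sum]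

lemma htr_conj {Nf : ℕ} (A B : Matrix (Fin Nf) (Fin Nf) ℂ) :
    (Matrix.trace (A * mconj B)).re = (Matrix.trace (B * mconj A)).re := by
  have : Matrix.trace (B * mconj A) = starRingEnd ℂ (Matrix.trace (A * mconj B)) := by
    rw [← trace_mconj, mconj_mul, mconj_mconj, Matrix.trace_mul_comm]
  rw [this, Complex.conj_re]

lemma hZ2 {Ns Nf : ℕ} (y : Fin Ns → Matrix (Fin Nf) (Fin Nf) ℂ) (i j : Fin Ns) :
    Zw y i j = 2 * (Matrix.trace (y j * mconj (y i))).re := by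
  rw [Zw, Matrix.trace_add, Complex.add_re, Matrix.trace_mul_comm (mconj (y i)) (y j),
    htr_conj (y i) (y j)]
  ring

lemma hAB {Ns Nf : ℕ} (y : Fin Ns → Matrix (Fin Nf) (Fin Nf) ℂ) (hy : ∀ i, (y i)ᵀ = y i)
    (i j : Fin Ns) :
    Matrix.trace (y i * mconj (y j) * y j * mconj (y i))
      = Matrix.trace (y j * mconj (y j) * y i * mconj (y i)) := by
  have h1 : (y i * mconj (y j) * y j * mconj (y i))ᵀ
      = mconj (y i) * (y j * (mconj (y j) * y i)) := by
    simp only [Matrix.transpose_mul, mconj_transpose, hy]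
  calc Matrix.trace (y i * mconj (y j) * y j * mconj (y i))
      = Matrix.trace ((y i * mconj (y j) * y j * mconj (y i))ᵀ) := (Matrix.trace_transpose _).symm
    _ = Matrix.trace (mconj (y i) * (y j * (mconj (y j) * y i))) := by rw [h1]
    _ = Matrix.trace (y j * (mconj (y j) * y i) * mconj (y i)) := Matrix.trace_mul_comm _ _
    _ = Matrix.trace (y j * mconj (y j) * y i * mconj (y i)) := by noncomm_ring

lemma trace_self_re_nonneg {Nf : ℕ} (A : Matrix (Fin Nf) (Fin Nf) ℂ) (hA : Aᵀ = A) :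
    0 ≤ (Matrix.trace (A * mconj A)).re := by
  have hA' : ∀ a b, A b a = A a b := fun a b => congrFun (congrFun hA a) b
  simp only [Matrix.trace, Matrix.diag, Matrix.mul_apply, mconj, Matrix.map_apply,
    Complex.re_sum]
  apply Finset.sum_nonneg; intro a _
  apply Finset.sum_nonneg; intro b _
  rw [hA' a b, Complex.mul_conj, Complex.ofReal_re]
  exact Complex.normSq_nonneg _

/-- Bound on the trace of the Yukawa Gram matrix: assuming `ε ≥ 0`, the Yukawa
fixed-point equation, and the quartic positivity assumption, `0 ≤ b₀ ≤ Ns ε`. -/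
theorem trace_gram_bound {Ns Nf : ℕ} (hNs : 1 ≤ Ns) (hNf : 1 ≤ Nf)
    (ε : ℝ) (hε : 0 ≤ ε) (y : Fin Ns → Matrix (Fin Nf) (Fin Nf) ℂ)
    (hy : ∀ i, (y i)ᵀ = y i)
    (hfp : ∀ i, betaYW ε y i = 0)
    (hpos : 0 ≤ (∑ i, ∑ j,
        (Matrix.trace ((y i * mconj (y j) + y j * mconj (y i)) *
            (y i * mconj (y j) + y j * mconj (y i)))
          - Matrix.trace (y i * mconj (y j) * (y j * mconj (y i))))).re) :
    0 ≤ b0inv y ∧ b0inv y ≤ (Ns : ℝ) * ε := by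
  classical
  -- the fixed-point equation traced against `mconj (y i)`
  have key : ∀ i : Fin Ns, (0:ℂ) =
      (↑(-(1/2) * ε) : ℂ) * Matrix.trace (y i * mconj (y i))
      + (↑(1/2:ℝ) : ℂ) * ∑ j, (Matrix.trace (y j * mconj (y j) * y i * mconj (y i))
          + Matrix.trace (y i * mconj (y j) * y j * mconj (y i))
          + (↑(4:ℝ) : ℂ) * Matrix.trace (y j * mconj (y i) * y j * mconj (y i)))
      + (↑(1/2:ℝ) : ℂ) * ∑ j, ((Zw y i j : ℂ) * Matrix.trace (y j * mconj (y i))) := by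
    intro i
    have h := congrArg (fun M => Matrix.trace (M * mconj (y i))) (hfp i)
    simp only [betaYW, Matrix.add_mul, Matrix.smul_mul, Finset.sum_mul, Matrix.trace_add,
      Matrix.trace_smul, Matrix.trace_sum, Matrix.zero_mul, Matrix.trace_zero,
      smul_eq_mul] at h
    push_cast
    linear_combination -h
  -- real part, sums split
  have keyre : ∀ i : Fin Ns, (0:ℝ) =
      -(1/2) * ε * (Matrix.trace (y i * mconj (y i))).re
      + (1/2) * ∑ j, (Matrix.trace (y j * mconj (y j) * y i * mconj (y i))).re
      + (1/2) * ∑ j, (Matrix.trace (y i * mconj (y j) * y j * mconj (y i))).re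
      + 2 * ∑ j, (Matrix.trace (y j * mconj (y i) * y j * mconj (y i))).re
      + (1/2) * ∑ j, (Zw y i j * (Matrix.trace (y j * mconj (y i))).re) := by
    intro i
    have h := congrArg Complex.re (key i)
    simp only [Complex.add_re, Complex.re_ofReal_mul, Complex.re_sum, Complex.zero_re,
      Finset.sum_add_distrib, ← Finset.mul_sum] at h
    linarith [h]
  -- sum over i
  have keysum : (0:ℝ) = ∑ i : Fin Ns,
      (-(1/2) * ε * (Matrix.trace (y i * mconj (y i))).re
      + (1/2) * ∑ j, (Matrix.trace (y j * mconj (y j) * y i * mconj (y i))).re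
      + (1/2) * ∑ j, (Matrix.trace (y i * mconj (y j) * y j * mconj (y i))).re
      + 2 * ∑ j, (Matrix.trace (y j * mconj (y i) * y j * mconj (y i))).re
      + (1/2) * ∑ j, (Zw y i j * (Matrix.trace (y j * mconj (y i))).re)) := by
    rw [show (∑ i : Fin Ns,
      (-(1/2) * ε * (Matrix.trace (y i * mconj (y i))).re
      + (1/2) * ∑ j, (Matrix.trace (y j * mconj (y j) * y i * mconj (y i))).re
      + (1/2) * ∑ j, (Matrix.trace (y i * mconj (y j) * y j * mconj (y i))).re
      + 2 * ∑ j, (Matrix.trace (y j * mconj (y i) * y j * mconj (y i))).re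
      + (1/2) * ∑ j, (Zw y i j * (Matrix.trace (y j * mconj (y i))).re)))
      = ∑ _i : Fin Ns, (0:ℝ) from Finset.sum_congr rfl fun i _ => (keyre i).symm]
    simp
  simp only [Finset.sum_add_distrib, ← Finset.mul_sum] at keysum
  -- supporting identities
  have hb0T : b0inv y = 2 * ∑ i, (Matrix.trace (y i * mconj (y i))).re := by
    rw [b0inv, Finset.mul_sum]
    exact Finset.sum_congr rfl fun i _ => hZ2 y i i
  have hεT : ε * b0inv y = 2 * (ε * ∑ i, (Matrix.trace (y i * mconj (y i))).re) := by
    rw [hb0T]; ring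
  have hSAB : (∑ i, ∑ j, (Matrix.trace (y i * mconj (y j) * y j * mconj (y i))).re)
      = ∑ i, ∑ j, (Matrix.trace (y j * mconj (y j) * y i * mconj (y i))).re :=
    Finset.sum_congr rfl fun i _ => Finset.sum_congr rfl fun j _ =>
      congrArg Complex.re (hAB y hy i j)
  have hSZQ : (∑ i, ∑ j, (Zw y i j * (Matrix.trace (y j * mconj (y i))).re))
      = (1/2) * ∑ i, ∑ j, Zw y i j ^ 2 := by
    rw [Finset.mul_sum]
    refine Finset.sum_congr rfl fun i _ => ?_
    rw [Finset.mul_sum]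
    refine Finset.sum_congr rfl fun j _ => ?_
    rw [hZ2 y i j]; ring
  -- positivity from hpos
  have hexp : ∀ i j : Fin Ns,
      Matrix.trace ((y i * mconj (y j) + y j * mconj (y i)) *
          (y i * mconj (y j) + y j * mconj (y i)))
        - Matrix.trace (y i * mconj (y j) * (y j * mconj (y i)))
      = Matrix.trace (y i * mconj (y j) * y i * mconj (y j))
        + Matrix.trace (y j * mconj (y i) * y j * mconj (y i))
        + Matrix.trace (y i * mconj (y j) * y j * mconj (y i)) := by
    intro i j
    rw [show y i * mconj (y j) * y i * mconj (y j)
          = (y i * mconj (y j)) * (y i * mconj (y j)) from mul_assoc _ _ _,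
        show y j * mconj (y i) * y j * mconj (y i)
          = (y j * mconj (y i)) * (y j * mconj (y i)) from mul_assoc _ _ _,
        show y i * mconj (y j) * y j * mconj (y i)
          = (y i * mconj (y j)) * (y j * mconj (y i)) from mul_assoc _ _ _]
    simp only [Matrix.add_mul, Matrix.mul_add, Matrix.trace_add]
    rw [Matrix.trace_mul_comm (y j * mconj (y i)) (y i * mconj (y j))]
    ring
  have hpos2 : (0:ℝ) ≤ ∑ i, ∑ j,
      ((Matrix.trace (y i * mconj (y j) * y i * mconj (y j))).re
        + (Matrix.trace (y j * mconj (y i) * y j * mconj (y i))).re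
        + (Matrix.trace (y i * mconj (y j) * y j * mconj (y i))).re) := by
    have e : (∑ i, ∑ j,
        (Matrix.trace ((y i * mconj (y j) + y j * mconj (y i)) *
            (y i * mconj (y j) + y j * mconj (y i)))
          - Matrix.trace (y i * mconj (y j) * (y j * mconj (y i)))))
        = ∑ i : Fin Ns, ∑ j : Fin Ns,
          (Matrix.trace (y i * mconj (y j) * y i * mconj (y j))
            + Matrix.trace (y j * mconj (y i) * y j * mconj (y i))
            + Matrix.trace (y i * mconj (y j) * y j * mconj (y i))) :=
      Finset.sum_congr rfl fun i _ => Finset.sum_congr rfl fun j _ => hexp i j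
    rw [e] at hpos
    simpa only [Complex.re_sum, Complex.add_re] using hpos
  simp only [Finset.sum_add_distrib] at hpos2
  have hswap : (∑ i, ∑ j, (Matrix.trace (y i * mconj (y j) * y i * mconj (y j))).re)
      = ∑ i, ∑ j, (Matrix.trace (y j * mconj (y i) * y j * mconj (y i))).re :=
    Finset.sum_comm
  -- Cauchy-Schwarz
  have hcs : (∑ i, Zw y i i) ^ 2 ≤ (Ns:ℝ) * ∑ i, Zw y i i ^ 2 := by
    have h := sq_sum_le_card_mul_sum_sq (s := (Finset.univ : Finset (Fin Ns)))
      (f := fun i => Zw y i i)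
    simpa using h
  have hdiag : (∑ i, Zw y i i ^ 2) ≤ ∑ i, ∑ j, Zw y i j ^ 2 :=
    Finset.sum_le_sum fun i _ =>
      Finset.single_le_sum (fun j _ => sq_nonneg (Zw y i j)) (Finset.mem_univ i)
  -- nonnegativity of b0
  have hTnn : (0:ℝ) ≤ ∑ i, (Matrix.trace (y i * mconj (y i))).re :=
    Finset.sum_nonneg fun i _ => trace_self_re_nonneg (y i) (hy i)
  have hb0nn : 0 ≤ b0inv y := by rw [hb0T]; linarith
  refine ⟨hb0nn, ?_⟩
  -- key inequality: Q ≤ ε * b0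
  have hQle : (∑ i, ∑ j, Zw y i j ^ 2) ≤ ε * b0inv y := by
    linarith [keysum, hSAB, hSZQ, hεT, hpos2, hswap]
  have hb0sq : b0inv y ^ 2 ≤ (Ns:ℝ) * (ε * b0inv y) := by
    have h1 : b0inv y ^ 2 ≤ (Ns:ℝ) * ∑ i, ∑ j, Zw y i j ^ 2 := by
      have := hcs.trans (by
        have : (0:ℝ) ≤ (Ns:ℝ) := by positivity
        exact mul_le_mul_of_nonneg_left hdiag this)
      simpa [b0inv] using this
    exact h1.trans (mul_le_mul_of_nonneg_left hQle (by positivity))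
  rcases eq_or_lt_of_le hb0nn with h0 | h0
  · rw [← h0]
    positivity
  · have h3 : b0inv y * b0inv y ≤ ((Ns:ℝ) * ε) * b0inv y := by nlinarith [hb0sq]
    exact le_of_mul_le_mul_right h3 h0
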